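/- For polynomials in two variables, PolyStrNNeg coincides with PolyNNeg: a polynomial P ∈ ℤ[X,Y] satisfies that every maximal monomial of every partial evaluation P|ν at natural numbers is non-negative if and only if P is non-negative and every maximal monomial of P is non-negative. -/

import Mathlib

open scoped BigOperators Classical

namespace NRatSeries

/-- All ways to split a word into a prefix and a suffix. -/
def splits {A : Type} (w : List A) : List (List A × List A) :=
  (List.range (w.length + 1)).map (fun i => (w.take i, w.drop i))

/-- All decompositions of `w` into `n` (possibly empty) consecutive factors. -/
def decomps {A : Type} : ℕ → List A → List (List (List A))
  | 0, w => if w.isEmpty then [[]] else []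
  | n+1, w => (splits w).flatMap (fun p => (decomps n p.2).map (fun l => p.1 :: l))

/-- The data defining a (ℤ-valued) polyregular computation of degree `d`:
a finite monoid `M`, a monoid morphism `μ` from words to `M`,
and a production function `π`. -/
structure PolyRegData (A : Type) (d : ℕ) where
  M : Type
  [mon : Monoid M]
  [fin : Fintype M]
  μ : List A → M
  π : (Fin (d + 1) → M) → ℤ
  map_nil : μ [] = 1
  map_append : ∀ u v : List A, μ (u ++ v) = μ u * μ v

attribute [instance] PolyRegData.mon PolyRegData.fin

/-- `D` computes `f` if `f w` is the sum, over all decompositions of `w`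
into `d+1` factors, of `π` applied to the images of the factors under `μ`. -/
def PolyRegData.Computes {A : Type} {d : ℕ} (D : PolyRegData A d) (f : List A → ℤ) : Prop :=
  ∀ w : List A,
    f w = ((decomps (d + 1) w).map (fun l => D.π (fun i => D.μ (l.getD i [])))).sum

/-- The production function takes values in ℕ. -/
def PolyRegData.NatOutput {A : Type} {d : ℕ} (D : PolyRegData A d) : Prop :=
  ∀ v, 0 ≤ D.π v

/-- The monoid is aperiodic. -/
def PolyRegData.AperiodicMonoid {A : Type} {d : ℕ} (D : PolyRegData A d) : Prop :=
  ∀ x : D.M, ∃ n : ℕ, x ^ (n + 1) = x ^ n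

/-- ℤ-polyregular of degree at most `d`. -/
def ZPolyD {A : Type} (d : ℕ) (f : List A → ℤ) : Prop :=
  ∃ D : PolyRegData A d, D.Computes f

/-- ℕ-polyregular of degree at most `d`. -/
def NPolyD {A : Type} (d : ℕ) (f : List A → ℤ) : Prop :=
  ∃ D : PolyRegData A d, D.Computes f ∧ D.NatOutput

/-- star-free ℤ-polyregular of degree at most `d`. -/
def ZSFD {A : Type} (d : ℕ) (f : List A → ℤ) : Prop :=
  ∃ D : PolyRegData A d, D.Computes f ∧ D.AperiodicMonoid

/-- star-free ℕ-polyregular of degree at most `d`. -/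
def NSFD {A : Type} (d : ℕ) (f : List A → ℤ) : Prop :=
  ∃ D : PolyRegData A d, D.Computes f ∧ D.NatOutput ∧ D.AperiodicMonoid

def ZPoly {A : Type} (f : List A → ℤ) : Prop := ∃ d, ZPolyD d f
def NPoly {A : Type} (f : List A → ℤ) : Prop := ∃ d, NPolyD d f
def ZSF {A : Type} (f : List A → ℤ) : Prop := ∃ d, ZSFD d f
def NSF {A : Type} (f : List A → ℤ) : Prop := ∃ d, NSFD d f

/-- A function on words is commutative if it is invariant under permutations
of its input, i.e. only depends on the letter counts. -/
def Commutes {A : Type} (f : List A → ℤ) : Prop :=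
  ∀ u v : List A, u.Perm v → f u = f v

/-- The word `η 0 ^ (x 0) ⋯ η (k-1) ^ (x (k-1))`. -/
def wordOf {A : Type} {k : ℕ} (η : Fin k → A) (x : Fin k → ℕ) : List A :=
  (List.finRange k).flatMap (fun i => List.replicate (x i) (η i))

/-- `g` represents the polynomial `P`. -/
def Represents {A : Type} {k : ℕ} (g : List A → ℤ) (P : MvPolynomial (Fin k) ℤ) : Prop :=
  ∃ η : Fin k → A, ∀ x : Fin k → ℕ,
    g (wordOf η x) = MvPolynomial.eval (fun i => (x i : ℤ)) P

/-- `g` represents the rational polynomial `P`. -/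
def RepresentsQ {A : Type} {k : ℕ} (g : List A → ℤ) (P : MvPolynomial (Fin k) ℚ) : Prop :=
  ∃ η : Fin k → A, ∀ x : Fin k → ℕ,
    (g (wordOf η x) : ℚ) = MvPolynomial.eval (fun i => (x i : ℚ)) P

/-- `α` is (the exponent vector of) a maximal monomial of `P` for the
divisibility preorder on monomials. -/
def MaxMonomial {k : ℕ} (P : MvPolynomial (Fin k) ℤ) (α : Fin k →₀ ℕ) : Prop :=
  α ∈ P.support ∧ ∀ β ∈ P.support, α ≤ β → β = α

/-- Partial substitution of natural numbers for some of the variables. -/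
noncomputable def restrict {k : ℕ} (ν : Fin k → Option ℕ) (P : MvPolynomial (Fin k) ℤ) :
    MvPolynomial (Fin k) ℤ :=
  MvPolynomial.bind₁
    (fun i => (ν i).elim (MvPolynomial.X i) (fun n => MvPolynomial.C (n : ℤ))) P

noncomputable def restrictQ {k : ℕ} (ν : Fin k → Option ℕ) (P : MvPolynomial (Fin k) ℚ) :
    MvPolynomial (Fin k) ℚ :=
  MvPolynomial.bind₁
    (fun i => (ν i).elim (MvPolynomial.X i) (fun n => MvPolynomial.C (n : ℚ))) P

/-- `PolyStrNNeg`: every maximal monomial of every partial evaluation of `P`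
at natural numbers has a non-negative coefficient. -/
def PolyStrNNeg {k : ℕ} (P : MvPolynomial (Fin k) ℤ) : Prop :=
  ∀ (ν : Fin k → Option ℕ) (α : Fin k →₀ ℕ),
    MaxMonomial (restrict ν P) α → 0 ≤ (restrict ν P).coeff α

/-- The translation `τ_K(P) = P(X₁ + K, …, X_k + K)`. -/
noncomputable def translate {k : ℕ} (K : ℕ) (P : MvPolynomial (Fin k) ℤ) :
    MvPolynomial (Fin k) ℤ :=
  MvPolynomial.bind₁ (fun i => MvPolynomial.X i + MvPolynomial.C (K : ℤ)) P

/-- The discrete derivative `Δ_K(P) = τ_K(P) - P`. -/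
noncomputable def delta {k : ℕ} (K : ℕ) (P : MvPolynomial (Fin k) ℤ) :
    MvPolynomial (Fin k) ℤ := translate K P - P

/-- `u ^ n` as concatenation. -/
def wpow {A : Type} (u : List A) (n : ℕ) : List A := (List.replicate n u).flatten

/-- A pumping pattern `q(x₁,…,x_p) = α₀ u₁^{x₁} α₁ ⋯ u_p^{x_p} α_p`. -/
def IsPumping {A : Type} {p : ℕ} (q : (Fin p → ℕ) → List A) : Prop :=
  ∃ (α : Fin (p + 1) → List A) (u : Fin p → List A),
    ∀ x : Fin p → ℕ,
      q x = α 0 ++ ((List.finRange p).map (fun i => wpow (u i) (x i) ++ α i.succ)).flatten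

/-- A natural binomial function: an ℕ-linear combination of products of
simple binomial functions `x ↦ binom (x - ℓ) k` (with truncated subtraction). -/
def IsNatBinomFun {p : ℕ} (F : (Fin p → ℕ) → ℕ) : Prop :=
  ∃ (n : ℕ) (c : Fin n → ℕ) (a b : Fin n → Fin p → ℕ),
    ∀ x : Fin p → ℕ, F x = ∑ i, c i * ∏ j, Nat.choose (x j - a i j) (b i j)

/-- The binomial monomial `pbinom (X_j - ℓ, m) = (X_j-ℓ)(X_j-ℓ-1)⋯(X_j-ℓ-m+1)/m!`. -/
noncomputable def pbinom {k : ℕ} (j : Fin k) (ℓ m : ℕ) : MvPolynomial (Fin k) ℚ :=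
  MvPolynomial.C ((m.factorial : ℚ)⁻¹) *
    ∏ t ∈ Finset.range m,
      (MvPolynomial.X j - MvPolynomial.C (ℓ : ℚ) - MvPolynomial.C (t : ℚ))

/-- Integer binomial polynomial: a ℤ-linear combination of products of
binomial monomials. -/
def IsIntBinomPoly {k : ℕ} (P : MvPolynomial (Fin k) ℚ) : Prop :=
  ∃ (n : ℕ) (c : Fin n → ℤ) (a b : Fin n → Fin k → ℕ),
    P = ∑ i, MvPolynomial.C (c i : ℚ) * ∏ j, pbinom j (a i j) (b i j)

/-- Natural binomial polynomial: an ℕ-linear combination of products of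
binomial monomials. -/
def IsNatBinomPoly {k : ℕ} (P : MvPolynomial (Fin k) ℚ) : Prop :=
  ∃ (n : ℕ) (c : Fin n → ℕ) (a b : Fin n → Fin k → ℕ),
    P = ∑ i, MvPolynomial.C (c i : ℚ) * ∏ j, pbinom j (a i j) (b i j)

/-- Strongly natural binomial polynomial: every partial substitution of
natural numbers yields a natural binomial polynomial. -/
def IsStrongNatBinomPoly {k : ℕ} (P : MvPolynomial (Fin k) ℚ) : Prop :=
  ∀ ν : Fin k → Option ℕ, IsNatBinomPoly (restrictQ ν P)

/-- Ultimately polynomial. -/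
def UltimatelyPoly {A : Type} (f : List A → ℤ) : Prop :=
  ∃ N₀ : ℕ, ∀ (p : ℕ) (q : (Fin p → ℕ) → List A), IsPumping q →
    ∃ P : MvPolynomial (Fin p) ℚ, ∀ x : Fin p → ℕ, (∀ i, N₀ ≤ x i) →
      (f (q x) : ℚ) = MvPolynomial.eval (fun i => (x i : ℚ)) P

/-- `(k,ℕ)`-combinatorial. -/
def Combinatorial {A : Type} (k : ℕ) (f : List A → ℤ) : Prop :=
  ∃ ω : ℕ, ∀ q : (Fin k → ℕ) → List A, IsPumping q →
    ∃ P : MvPolynomial (Fin k) ℚ, IsStrongNatBinomPoly P ∧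
      ∀ x : Fin k → ℕ, (∀ i, 1 ≤ x i) →
        (f (q (fun i => ω * x i)) : ℚ) = MvPolynomial.eval (fun i => (x i : ℚ)) P

/-!
Fixing one of the two variables of `P` leaves a univariate polynomial in the other one, which
is non-negative on `ℕ` because `P` is. Its maximal monomial is its leading term, and a
leading coefficient of a polynomial that is non-negative on `ℕ` cannot be negative, since the
polynomial would tend to `-∞`. In the other direction, fixing both variables leaves the constant `P(x)`,
which is its own maximal monomial when it is non-zero.
-/

theorem _root_.Polynomial.leadingCoeff_nonneg_of_eval_natCast_nonneg {p : Polynomial ℤ}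
    (hp : ∀ n : ℕ, 0 ≤ p.eval (n : ℤ)) : 0 ≤ p.leadingCoeff := by
  by_contra! hneg
  rcases le_or_gt p.degree 0 with hdeg | hdeg
  · rw [Polynomial.eq_C_of_degree_le_zero hdeg, Polynomial.leadingCoeff_C] at hneg
    exact hneg.not_ge (by simpa [Polynomial.coeff_zero_eq_eval_zero] using hp 0)
  · set q := p.map (Int.castRingHom ℝ)
    have hq : Filter.Tendsto (fun x => q.eval x) Filter.atTop Filter.atBot := by
      refine q.tendsto_atBot_of_leadingCoeff_nonpos ?_ ?_
      · rwa [Polynomial.degree_map_eq_of_injective Int.cast_injective]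
      · rw [Polynomial.leadingCoeff_map_of_injective Int.cast_injective]
        simpa using hneg.le
    obtain ⟨n, hn⟩ := ((tendsto_natCast_atTop_atTop (R := ℝ)).eventually
      (hq.eventually (Filter.eventually_lt_atBot 0))).exists
    rw [Polynomial.eval_natCast_map] at hn
    exact (hp n).not_gt (by simpa using hn)

theorem _root_.MvPolynomial.coeff_single_toMvPolynomial {σ R : Type*} [CommSemiring R]
    (j : σ) (p : Polynomial R) (n : ℕ) :
    (p.toMvPolynomial j).coeff (Finsupp.single j n) = p.coeff n := by
  induction p using Polynomial.induction_on' with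
  | add p q hp hq => simp [hp, hq]
  | monomial m c =>
    rw [← Polynomial.C_mul_X_pow_eq_monomial, map_mul, map_pow, Polynomial.toMvPolynomial_C,
      Polynomial.toMvPolynomial_X, MvPolynomial.X_pow_eq_monomial, MvPolynomial.C_mul_monomial,
      mul_one, MvPolynomial.coeff_monomial, Polynomial.coeff_C_mul_X_pow]
    simp only [(Finsupp.single_injective j).eq_iff]
    exact if_congr eq_comm rfl rfl

theorem _root_.MvPolynomial.vars_toMvPolynomial_subset {σ R : Type*} [CommSemiring R]
    (j : σ) (p : Polynomial R) : (p.toMvPolynomial j).vars ⊆ {j} := by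
  rw [Polynomial.toMvPolynomial_eq_rename_comp]
  refine (MvPolynomial.vars_rename _ _).trans fun i hi => ?_
  obtain ⟨_, _, rfl⟩ := Finset.mem_image.1 hi
  exact Finset.mem_singleton_self j

theorem _root_.MvPolynomial.eq_single_of_mem_support_of_vars_subset {σ R : Type*}
    [CommSemiring R] {Q : MvPolynomial σ R} {j : σ} (hvars : Q.vars ⊆ {j})
    {m : σ →₀ ℕ} (hm : m ∈ Q.support) : m = Finsupp.single j (m j) :=
  Finsupp.support_subset_singleton.1
    ((MvPolynomial.support_subset_vars_of_mem_support hm).trans hvars)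

theorem _root_.MvPolynomial.exists_toMvPolynomial_eq_of_vars_subset {σ R : Type*}
    [CommSemiring R] {Q : MvPolynomial σ R} {j : σ} (hvars : Q.vars ⊆ {j}) :
    ∃ p : Polynomial R, p.toMvPolynomial j = Q := by
  obtain ⟨q, rfl⟩ := MvPolynomial.exists_rename_eq_of_vars_subset_range Q (fun _ : Unit => j)
    (fun _ _ _ => rfl) fun i hi => ⟨(), (Finset.mem_singleton.1 (hvars hi)).symm⟩
  refine ⟨MvPolynomial.uniqueAlgEquiv R Unit q, ?_⟩
  rw [Polynomial.toMvPolynomial_eq_rename_comp, AlgHom.comp_apply, AlgEquiv.coe_toAlgHom,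
    AlgEquiv.symm_apply_apply]

theorem coeff_eq_leadingCoeff_of_maxMonomial_toMvPolynomial {k : ℕ} {p : Polynomial ℤ}
    {j : Fin k} {α : Fin k →₀ ℕ} (hα : MaxMonomial (p.toMvPolynomial j) α) :
    (p.toMvPolynomial j).coeff α = p.leadingCoeff := by
  obtain ⟨hαs, hmax⟩ := hα
  have hα_eq := MvPolynomial.eq_single_of_mem_support_of_vars_subset
    (MvPolynomial.vars_toMvPolynomial_subset j p) hαs
  have hcoeff : p.coeff (α j) ≠ 0 := by
    rwa [MvPolynomial.mem_support_iff, hα_eq, MvPolynomial.coeff_single_toMvPolynomial] at hαs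
  have hdeg : p.natDegree = α j := by
    have htop : Finsupp.single j p.natDegree ∈ (p.toMvPolynomial j).support := by
      rw [MvPolynomial.mem_support_iff, MvPolynomial.coeff_single_toMvPolynomial]
      exact Polynomial.leadingCoeff_ne_zero.2 (by rintro rfl; exact hcoeff rfl)
    have hle : α ≤ Finsupp.single j p.natDegree := by
      rw [hα_eq, Finsupp.single_le_iff, Finsupp.single_eq_same]
      exact Polynomial.le_natDegree_of_ne_zero hcoeff
    simpa using congrArg (· j) (hmax _ htop hle)
  rw [hα_eq, MvPolynomial.coeff_single_toMvPolynomial, Polynomial.leadingCoeff, hdeg]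

theorem coeff_nonneg_of_maxMonomial_of_vars_subset {k : ℕ} {Q : MvPolynomial (Fin k) ℤ}
    {j : Fin k} (hQ : ∀ x : Fin k → ℕ, 0 ≤ MvPolynomial.eval (fun i => (x i : ℤ)) Q)
    (hvars : Q.vars ⊆ {j}) {α : Fin k →₀ ℕ} (hα : MaxMonomial Q α) : 0 ≤ Q.coeff α := by
  obtain ⟨p, rfl⟩ := MvPolynomial.exists_toMvPolynomial_eq_of_vars_subset hvars
  rw [coeff_eq_leadingCoeff_of_maxMonomial_toMvPolynomial hα]
  exact Polynomial.leadingCoeff_nonneg_of_eval_natCast_nonneg fun n => by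
    simpa using hQ fun _ => n

theorem restrict_none {k : ℕ} (P : MvPolynomial (Fin k) ℤ) :
    restrict (fun _ => none) P = P :=
  DFunLike.congr_fun MvPolynomial.bind₁_X_left P

theorem eval_restrict {k : ℕ} (ν : Fin k → Option ℕ) (P : MvPolynomial (Fin k) ℤ)
    (x : Fin k → ℕ) :
    MvPolynomial.eval (fun i => (x i : ℤ)) (restrict ν P) =
      MvPolynomial.eval (fun i => ((ν i).getD (x i) : ℤ)) P := by
  refine (MvPolynomial.eval₂Hom_bind₁ _ _ _ P).trans
    (congrArg (fun f => MvPolynomial.eval f P) (funext fun i => ?_))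
  cases ν i <;> simp

theorem notMem_vars_restrict {k : ℕ} {ν : Fin k → Option ℕ} {i : Fin k} {n : ℕ}
    (hi : ν i = some n) (P : MvPolynomial (Fin k) ℤ) : i ∉ (restrict ν P).vars := by
  intro hmem
  obtain ⟨l, -, hl⟩ := MvPolynomial.mem_vars_bind₁ _ _ hmem
  cases hν : ν l with
  | none =>
    rw [hν, Option.elim_none, MvPolynomial.vars_X, Finset.mem_singleton] at hl
    subst hl
    simp [hi] at hν
  | some m =>
    rw [hν, Option.elim_some, MvPolynomial.vars_C] at hl
    exact Finset.notMem_empty i hl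

theorem vars_restrict_subset_rev {ν : Fin 2 → Option ℕ} {i : Fin 2} {n : ℕ}
    (hi : ν i = some n) (P : MvPolynomial (Fin 2) ℤ) : (restrict ν P).vars ⊆ {i.rev} :=
  fun l hl => Finset.mem_singleton.2 <| (by decide : ∀ i l : Fin 2, l ≠ i → l = i.rev) i l
    fun h => notMem_vars_restrict hi P (h ▸ hl)

theorem eval_nonneg_of_polyStrNNeg {k : ℕ} {P : MvPolynomial (Fin k) ℤ} (hP : PolyStrNNeg P)
    (x : Fin k → ℕ) : 0 ≤ MvPolynomial.eval (fun i => (x i : ℤ)) P := by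
  set ν : Fin k → Option ℕ := fun i => some (x i)
  have hconst : restrict ν P = MvPolynomial.C ((restrict ν P).coeff 0) :=
    MvPolynomial.vars_eq_empty_iff_eq_C.1 <| Finset.eq_empty_of_forall_notMem fun i =>
      notMem_vars_restrict rfl P
  have heval : MvPolynomial.eval (fun i => (x i : ℤ)) P = (restrict ν P).coeff 0 := by
    rw [← MvPolynomial.eval_C (f := fun i => (x i : ℤ)) ((restrict ν P).coeff 0), ← hconst,
      eval_restrict]
    rfl
  rw [heval]
  by_cases hzero : (restrict ν P).coeff 0 = 0
  · exact hzero.ge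
  · refine hP ν 0 ⟨MvPolynomial.mem_support_iff.2 hzero, fun β hβ _ => ?_⟩
    rw [hconst, MvPolynomial.support_C, if_neg hzero] at hβ
    exact Finset.mem_singleton.1 hβ

/-- in two variables, `PolyStrNNeg` coincides with `PolyNNeg`:
`P` has all maximal monomials of all partial evaluations non-negative iff `P`
is non-negative on ℕ² and all maximal monomials of `P` are non-negative. -/
theorem statement7 (P : MvPolynomial (Fin 2) ℤ) :
    PolyStrNNeg P ↔
      ((∀ x : Fin 2 → ℕ, 0 ≤ MvPolynomial.eval (fun i => (x i : ℤ)) P) ∧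
        ∀ α : Fin 2 →₀ ℕ, MaxMonomial P α → 0 ≤ P.coeff α) := by
  refine ⟨fun hP => ⟨eval_nonneg_of_polyStrNNeg hP, fun α hα => ?_⟩, ?_⟩
  · simpa [restrict_none] using hP (fun _ => none) α (by rwa [restrict_none])
  rintro ⟨hnonneg, hmax⟩ ν α hα
  by_cases hfree : ∀ i, ν i = none
  · obtain rfl : ν = fun _ => none := funext hfree
    rw [restrict_none] at hα ⊢
    exact hmax α hα
  obtain ⟨i, hi⟩ := not_forall.1 hfree
  obtain ⟨n, hn⟩ := Option.ne_none_iff_exists'.1 hi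
  exact coeff_nonneg_of_maxMonomial_of_vars_subset
    (fun x => (eval_restrict ν P x).symm ▸ hnonneg _) (vars_restrict_subset_rev hn P) hα

end NRatSeries
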